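/- Strict compatibility with the weight filtration: every morphism f : (V, W, F) → (V', W', F') of mixed Hodge structures is strictly compatible with the weight filtrations, i.e. f(W_n) = f(V) ∩ W'_n for every integer n. -/

import Mathlib

open scoped TensorProduct

private lemma sigmaC_aux (V : Type*) [AddCommGroup V] [Module ℝ V] (c : ℂ) (x : ℂ ⊗[ℝ] V) :
    TensorProduct.map Complex.conjAe.toLinearMap LinearMap.id (c • x) =
      (starRingEnd ℂ) c • TensorProduct.map Complex.conjAe.toLinearMap LinearMap.id x := by
  induction x using TensorProduct.induction_on with
  | zero => simp
  | tmul z v => simp [TensorProduct.smul_tmul', smul_eq_mul, map_mul]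
  | add x y hx hy => simp only [smul_add, map_add, hx, hy]

/-- The conjugation involution `σ` of the complexification `ℂ ⊗[ℝ] V`,
as a `conj`-semilinear map. -/
noncomputable def sigmaC (V : Type*) [AddCommGroup V] [Module ℝ V] :
    (ℂ ⊗[ℝ] V) →ₛₗ[starRingEnd ℂ] (ℂ ⊗[ℝ] V) where
  toFun := TensorProduct.map Complex.conjAe.toLinearMap LinearMap.id
  map_add' x y := map_add _ x y
  map_smul' c x := sigmaC_aux V c x

/-- A mixed Hodge structure on a real vector space `V`: an increasing, bounded, exhaustive
weight filtration `W` of `V` by real subspaces and a decreasing, bounded, exhaustive Hodge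
filtration `F` of `V_ℂ = ℂ ⊗[ℝ] V` by complex subspaces, such that for every `n` the
filtration induced by `F` on `Gr^W_n = W_n / W_{n-1}` is a Hodge filtration of weight `n`.

Identifying the complexification of `Gr^W_n` with `(W_n)_ℂ / (W_{n-1})_ℂ` (where
`(W_n)_ℂ := (W n).baseChange ℂ ⊆ V_ℂ`), the Hodge filtration condition of weight `n` on
`Gr^W_n` — namely `F^p(Gr^W_n)_ℂ ⊕ σ(F^{n-p+1}(Gr^W_n)_ℂ) = (Gr^W_n)_ℂ` for all `p`, where
`F^p(Gr^W_n)_ℂ` is the image of `F^p ⊓ (W_n)_ℂ` — is expressed below by pulling back along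
the quotient map `(W_n)_ℂ → (W_n)_ℂ / (W_{n-1})_ℂ`: the first displayed equation is the
disjointness of the two images in the quotient, the second their spanning of the quotient. -/
def IsMixedHodgeStructure (V : Type*) [AddCommGroup V] [Module ℝ V]
    (W : ℤ → Submodule ℝ V) (F : ℤ → Submodule ℂ (ℂ ⊗[ℝ] V)) : Prop :=
  Monotone W ∧
  (∃ a : ℤ, ∀ n ≤ a, W n = ⊥) ∧
  (∃ b : ℤ, ∀ n ≥ b, W n = ⊤) ∧
  (∀ p : ℤ, F (p + 1) ≤ F p) ∧
  (∃ a : ℤ, ∀ p ≤ a, F p = ⊤) ∧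
  (∃ b : ℤ, ∀ p ≥ b, F p = ⊥) ∧
  (∀ n p : ℤ,
    ((F p ⊓ (W n).baseChange ℂ) ⊔ (W (n - 1)).baseChange ℂ) ⊓
        (((F (n - p + 1) ⊓ (W n).baseChange ℂ).map (sigmaC V)) ⊔ (W (n - 1)).baseChange ℂ)
      = (W (n - 1)).baseChange ℂ ∧
    (F p ⊓ (W n).baseChange ℂ) ⊔ ((F (n - p + 1) ⊓ (W n).baseChange ℂ).map (sigmaC V))
        ⊔ (W (n - 1)).baseChange ℂ
      = (W n).baseChange ℂ)

/-!
Following Deligne, the subspaces of `V_ℂ`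
`I^{p,q} = F^p ∩ W_{p+q} ∩ (F̄^q ∩ W_{p+q} + ∑_{j ≥ 1} F̄^{q-j} ∩ W_{p+q-j-1})` split the
weight filtration: `W_m = (∑_{p+q=m} I^{p,q}) ⊕ W_{m-1}`. Being built from `W`, `F` and `F̄` by
sums and intersections, they are respected by every morphism. So if `v ∈ W_m` with `m > n` and
`f v ∈ W'_n`, write `v = x + w` with `x ∈ ∑_{p+q=m} I^{p,q}` and `w ∈ W_{m-1}`: then `f x` lies in
`∑_{p+q=m} I'^{p,q} ∩ W'_{m-1} = 0`, hence `f v = f w`, and one descends to `m = n`.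
All of this only uses the modular law in the lattice of complex subspaces; taking real parts
brings the conclusion back from `V_ℂ` to `V`.
-/

section Lattice

variable {L : Type*} [CompleteLattice L]

/-- The preimage in `W n` of the filtration induced by `F` on `W n / W (n - 1)`. -/
def grInduced (W F : ℤ → L) (n p : ℤ) : L :=
  F p ⊓ W n ⊔ W (n - 1)

/-- Mixed Hodge structure axioms in lattice form, for the lattice of complex subspaces of `V_ℂ`,
with `G` in the role of the conjugate filtration `σ F`. -/
structure IsMixedOpposed (W F G : ℤ → L) : Prop where
  monotone_weight : Monotone W
  weight_eventually_bot : ∃ a, ∀ n ≤ a, W n = ⊥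
  antitone_hodge : Antitone F
  hodge_eventually_bot : ∃ b, ∀ p ≥ b, F p = ⊥
  antitone_conj : Antitone G
  conj_eventually_bot : ∃ b, ∀ q ≥ b, G q = ⊥
  grInduced_inf (n p : ℤ) : grInduced W F n p ⊓ grInduced W G n (n - p + 1) = W (n - 1)
  grInduced_sup (n p : ℤ) : grInduced W F n p ⊔ grInduced W G n (n - p + 1) = W n

/-- With `i = j - 1`, this is Deligne's `∑_{j ≥ 1} G^{q-j} ∩ W_{n-j-1}`. -/
def deligneTail (W G : ℤ → L) (n q : ℤ) : L :=
  ⨆ i : ℕ, G (q - 1 - i) ⊓ W (n - 2 - i)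

/-- Deligne's splitting
`I^{p,q} = F^p ∩ W_{p+q} ∩ (G^q ∩ W_{p+q} + ∑_{j ≥ 1} G^{q-j} ∩ W_{p+q-j-1})`. -/
def deligneI (W F G : ℤ → L) (p q : ℤ) : L :=
  F p ⊓ W (p + q) ⊓ (G q ⊓ W (p + q) ⊔ deligneTail W G (p + q) q)

def deligneSum (W F G : ℤ → L) (m p : ℤ) : L :=
  ⨆ i : ℕ, deligneI W F G (p + i) (m - p - i)

lemma deligneTail_eq (W G : ℤ → L) (n q : ℤ) :
    deligneTail W G n q = G (q - 1) ⊓ W (n - 2) ⊔ deligneTail W G (n - 1) (q - 1) := by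
  rw [deligneTail, deligneTail, ← sup_iSup_nat_succ]
  congr 1
  · simp
  · congr! 4 <;> push_cast <;> ring

lemma deligneSum_eq (W F G : ℤ → L) (m p : ℤ) :
    deligneSum W F G m p = deligneI W F G p (m - p) ⊔ deligneSum W F G m (p + 1) := by
  rw [deligneSum, deligneSum, ← sup_iSup_nat_succ]
  congr 1
  · simp
  · congr! 3 <;> push_cast <;> ring

lemma deligneTail_le {W : ℤ → L} (hW : Monotone W) (G : ℤ → L) (n q : ℤ) :
    deligneTail W G n q ≤ W (n - 2) :=
  iSup_le fun _ => inf_le_right.trans (hW (by omega))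

end Lattice

namespace IsMixedOpposed

variable {L : Type*} [CompleteLattice L] {W F G : ℤ → L}

lemma deligneI_le_grInduced_conj (h : IsMixedOpposed W F G) (p m : ℤ) :
    deligneI W F G p (m - p) ≤ grInduced W G m (m - p) := by
  rw [deligneI, grInduced, add_sub_cancel]
  exact inf_le_right.trans (sup_le_sup_left
    ((deligneTail_le h.monotone_weight G _ _).trans (h.monotone_weight (by omega))) _)

lemma deligneSum_le_hodge (h : IsMixedOpposed W F G) (m p : ℤ) :
    deligneSum W F G m p ≤ F p ⊓ W m :=
  iSup_le fun i => inf_le_left.trans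
    (inf_le_inf (h.antitone_hodge (by omega)) (le_of_eq (congrArg W (by ring))))

lemma weight_pred_le (h : IsMixedOpposed W F G) (p q : ℤ) :
    W (p + q - 1) ≤
      F p ⊓ W (p + q - 1) ⊔ (G q ⊓ W (p + q - 1) ⊔ deligneTail W G (p + q) q) := by
  obtain ⟨a, ha⟩ := h.weight_eventually_bot
  induction q using Int.inductionOn' (b := a - p) with
  | zero => rw [ha (p + (a - p) - 1) (by omega)]; exact bot_le
  | pred k hk _ => rw [ha (p + (k - 1) - 1) (by omega)]; exact bot_le
  | succ k _ ih =>
    rw [deligneTail_eq, show p + (k + 1) - 1 = p + k by ring,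
      show p + (k + 1) - 2 = p + k - 1 by ring, add_sub_cancel_right]
    have hih := ih.trans (sup_le_sup
      (inf_le_inf_left (F p) (h.monotone_weight (by omega : p + k - 1 ≤ p + k)))
      (le_sup_right (a := G (k + 1) ⊓ W (p + k))))
    calc W (p + k)
        = grInduced W F (p + k) p ⊔ grInduced W G (p + k) (k + 1) :=
          (h.grInduced_sup (p + k) p).symm.trans (by rw [show p + k - p + 1 = k + 1 by ring])
      _ ≤ _ := sup_le (sup_le le_sup_left hih) (sup_le (le_sup_of_le_right le_sup_left) hih)

variable [IsModularLattice L]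

lemma hodge_inf_weight_inf_le (h : IsMixedOpposed W F G) (p k : ℤ) :
    F p ⊓ W (p + k - 1) ⊓ (G k ⊔ deligneTail W G (p + k) k) ≤
      F p ⊓ W (p + (k - 1) - 1) ⊓ (G (k - 1) ⊔ deligneTail W G (p + (k - 1)) (k - 1)) := by
  have hW := h.monotone_weight
  have hK : deligneTail W G (p + k) k ≤ W (p + k - 1 - 1) :=
    (deligneTail_le hW G (p + k) k).trans_eq (congrArg W (by ring))
  -- The tail already lies in `W (p + k - 2)`, so the left side lies in both induced
  -- filtrations on `Gr^W_{p+k-1}`, which are opposed.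
  have hlower :
      F p ⊓ W (p + k - 1) ⊓ (G k ⊔ deligneTail W G (p + k) k) ≤ W (p + k - 1 - 1) := by
    have hinf := h.grInduced_inf (p + k - 1) p
    rw [show p + k - 1 - p + 1 = k by ring] at hinf
    refine le_trans (le_inf (inf_le_left.trans le_sup_left) ?_) hinf.le
    refine (inf_le_inf_right _ inf_le_right).trans ?_
    rw [inf_comm, sup_comm, sup_inf_assoc_of_le _ (hK.trans (hW (by omega)))]
    exact sup_le (hK.trans le_sup_right) le_sup_left
  refine le_inf (le_inf (inf_le_left.trans inf_le_left) (hlower.trans_eq (by ring_nf))) ?_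
  rw [deligneTail_eq, show p + k - 2 = p + (k - 1) - 1 by ring,
    show p + k - 1 = p + (k - 1) by ring]
  exact inf_le_right.trans (sup_le (le_sup_of_le_left (h.antitone_conj (by omega)))
    (sup_le (le_sup_of_le_left inf_le_left) le_sup_right))

lemma deligneI_inf_weight_pred (h : IsMixedOpposed W F G) (p q : ℤ) :
    deligneI W F G p q ⊓ W (p + q - 1) = ⊥ := by
  obtain ⟨a, ha⟩ := h.weight_eventually_bot
  have hdescent : ∀ k ≤ q, deligneI W F G p q ⊓ W (p + q - 1) ≤
      F p ⊓ W (p + k - 1) ⊓ (G k ⊔ deligneTail W G (p + k) k) := by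
    intro k hk
    induction k, hk using Int.leInductionDown with
    | base =>
      exact le_inf (le_inf (inf_le_left.trans (inf_le_left.trans inf_le_left)) inf_le_right)
        (inf_le_left.trans (inf_le_right.trans (sup_le_sup_right inf_le_left _)))
    | pred k _ ih => exact ih.trans (h.hodge_inf_weight_inf_le p k)
  refine le_bot_iff.mp ((hdescent (min q (a - p)) (min_le_left _ _)).trans ?_)
  exact inf_le_left.trans (inf_le_right.trans (ha _ (by omega)).le)

lemma grInduced_inf_grInduced_le (h : IsMixedOpposed W F G) (m p : ℤ) :
    grInduced W F m p ⊓ grInduced W G m (m - p) ≤ deligneI W F G p (m - p) ⊔ W (m - 1) := by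
  set X := F p ⊓ W m
  set X' := F p ⊓ W (m - 1)
  set J := G (m - p) ⊓ W m ⊔ deligneTail W G m (m - p)
  have hWJ : W (m - 1) ≤ X' ⊔ J := by
    have hpred := h.weight_pred_le p (m - p)
    rw [add_sub_cancel] at hpred
    exact hpred.trans (sup_le_sup_left
      (sup_le_sup_right (inf_le_inf_left _ (h.monotone_weight (by omega))) _) _)
  have hX' : X' ≤ X := inf_le_inf_left _ (h.monotone_weight (by omega))
  calc grInduced W F m p ⊓ grInduced W G m (m - p)
      ≤ (W (m - 1) ⊔ X) ⊓ (X' ⊔ J) :=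
        inf_le_inf (sup_comm X _).le (sup_le (le_sup_of_le_right le_sup_left) hWJ)
    _ = W (m - 1) ⊔ (X ⊓ J ⊔ X') := by
        rw [sup_inf_assoc_of_le _ hWJ, sup_comm X', inf_sup_assoc_of_le _ hX']
    _ ≤ deligneI W F G p (m - p) ⊔ W (m - 1) := by
        rw [deligneI, add_sub_cancel]
        exact sup_le le_sup_right (sup_le le_sup_left (le_sup_of_le_right inf_le_right))

lemma grInduced_hodge_le (h : IsMixedOpposed W F G) (m p : ℤ) :
    grInduced W F m p ≤ deligneSum W F G m p ⊔ W (m - 1) := by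
  obtain ⟨b, hb⟩ := h.hodge_eventually_bot
  have htop : ∀ k ≥ b, grInduced W F m k = W (m - 1) := fun k hk => by
    rw [grInduced, hb k hk, bot_inf_eq, bot_sup_eq]
  induction p using Int.inductionOn' (b := b) with
  | zero => exact (htop b le_rfl).trans_le le_sup_right
  | succ k hk _ => exact (htop (k + 1) (by omega)).trans_le le_sup_right
  | pred k _ ih =>
    have hsup := h.grInduced_sup m k
    rw [show m - k + 1 = m - (k - 1) by ring] at hsup
    have hspan := h.grInduced_inf_grInduced_le m (k - 1)
    have hmono : grInduced W F m k ≤ grInduced W F m (k - 1) :=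
      sup_le_sup_right (inf_le_inf_right _ (h.antitone_hodge (by omega))) _
    calc grInduced W F m (k - 1)
        = grInduced W F m k ⊔ grInduced W F m (k - 1) ⊓ grInduced W G m (m - (k - 1)) := by
          rw [inf_comm, ← sup_inf_assoc_of_le _ hmono, hsup]
          exact (inf_eq_right.mpr (sup_le inf_le_right (h.monotone_weight (by omega)))).symm
      _ ≤ deligneSum W F G m (k - 1) ⊔ W (m - 1) := by
          rw [deligneSum_eq, sub_add_cancel]
          exact sup_le (ih.trans (sup_le_sup_right le_sup_right _))
            (hspan.trans (sup_le_sup_right le_sup_left _))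

lemma exists_weight_le_deligneSum (h : IsMixedOpposed W F G) (m : ℤ) :
    ∃ p, W m ≤ deligneSum W F G m p ⊔ W (m - 1) := by
  obtain ⟨b, hb⟩ := h.conj_eventually_bot
  refine ⟨m + 1 - b, ?_⟩
  have hG : grInduced W G m b = W (m - 1) := by
    rw [grInduced, hb b le_rfl, bot_inf_eq, bot_sup_eq]
  rw [← h.grInduced_sup m (m + 1 - b), show m - (m + 1 - b) + 1 = b by ring, hG]
  exact sup_le (h.grInduced_hodge_le m _) le_sup_right

lemma deligneSum_inf_weight_pred (h : IsMixedOpposed W F G) (m p : ℤ) :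
    deligneSum W F G m p ⊓ W (m - 1) = ⊥ := by
  obtain ⟨b, hb⟩ := h.hodge_eventually_bot
  have htop : ∀ k ≥ b, deligneSum W F G m k = ⊥ := fun k hk =>
    le_bot_iff.mp ((h.deligneSum_le_hodge m k).trans (by rw [hb k hk, bot_inf_eq]))
  induction p using Int.inductionOn' (b := b) with
  | zero => rw [htop b le_rfl, bot_inf_eq]
  | succ k hk _ => rw [htop (k + 1) (by omega), bot_inf_eq]
  | pred k _ ih =>
    set A := grInduced W F m k
    set I := deligneI W F G (k - 1) (m - (k - 1))
    have hI : I ⊓ A = ⊥ := by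
      have hinf := h.grInduced_inf m k
      rw [show m - k + 1 = m - (k - 1) by ring] at hinf
      have hIW := h.deligneI_inf_weight_pred (k - 1) (m - (k - 1))
      rw [add_sub_cancel] at hIW
      refine le_bot_iff.mp (le_trans ?_ hIW.le)
      exact le_inf inf_le_left (hinf ▸ le_inf inf_le_right
        (inf_le_left.trans (h.deligneI_le_grInduced_conj (k - 1) m)))
    have hDA : deligneSum W F G m k ≤ A := (h.deligneSum_le_hodge m k).trans le_sup_left
    have hWA : A ⊓ W (m - 1) = W (m - 1) := inf_eq_right.mpr le_sup_right
    calc deligneSum W F G m (k - 1) ⊓ W (m - 1)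
        = (I ⊔ deligneSum W F G m k) ⊓ A ⊓ W (m - 1) := by
          rw [deligneSum_eq, sub_add_cancel, inf_assoc, hWA]
      _ = ⊥ := by rw [sup_comm, sup_inf_assoc_of_le _ hDA, hI, sup_bot_eq, ih]

end IsMixedOpposed

section Morphism

variable {L L' : Type*} [CompleteLattice L] [CompleteLattice L'] {W F G : ℤ → L}
  {W' F' G' : ℤ → L'} {φ : L → L'} {ψ : L' → L}

lemma GaloisConnection.map_deligneI_le (gc : GaloisConnection φ ψ) (hW : ∀ n, φ (W n) ≤ W' n)
    (hF : ∀ p, φ (F p) ≤ F' p) (hG : ∀ q, φ (G q) ≤ G' q) (p q : ℤ) :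
    φ (deligneI W F G p q) ≤ deligneI W' F' G' p q := by
  have hinf : ∀ {a b : L} {a' b' : L'}, φ a ≤ a' → φ b ≤ b' → φ (a ⊓ b) ≤ a' ⊓ b' :=
    fun ha hb => gc.monotone_l.map_inf_le _ _ |>.trans (inf_le_inf ha hb)
  refine hinf (hinf (hF p) (hW _)) ?_
  rw [deligneTail, gc.l_sup, gc.l_iSup]
  exact sup_le_sup (hinf (hG q) (hW _)) (iSup_mono fun _ => hinf (hG _) (hW _))

lemma GaloisConnection.map_deligneSum_le (gc : GaloisConnection φ ψ) (hW : ∀ n, φ (W n) ≤ W' n)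
    (hF : ∀ p, φ (F p) ≤ F' p) (hG : ∀ q, φ (G q) ≤ G' q) (m p : ℤ) :
    φ (deligneSum W F G m p) ≤ deligneSum W' F' G' m p := by
  rw [deligneSum, gc.l_iSup]
  exact iSup_mono fun _ => gc.map_deligneI_le hW hF hG _ _

theorem IsMixedOpposed.map_weight_inf_le [IsModularLattice L] [IsModularLattice L']
    (h : IsMixedOpposed W F G) (h' : IsMixedOpposed W' F' G') (gc : GaloisConnection φ ψ)
    (hW : ∀ n, φ (W n) ≤ W' n) (hF : ∀ p, φ (F p) ≤ F' p) (hG : ∀ q, φ (G q) ≤ G' q)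
    (n m : ℤ) : φ (W m) ⊓ W' n ≤ φ (W n) := by
  obtain hm | hm := le_total m n
  · exact inf_le_left.trans (gc.monotone_l (h.monotone_weight hm))
  induction m, hm using Int.leInduction with
  | base => exact inf_le_left
  | succ m hnm ih =>
    obtain ⟨p, hp⟩ := h.exists_weight_le_deligneSum (m + 1)
    rw [add_sub_cancel_right] at hp
    have hD : φ (deligneSum W F G (m + 1) p) ⊓ W' m = ⊥ := by
      have := h'.deligneSum_inf_weight_pred (m + 1) p
      rw [add_sub_cancel_right] at this
      exact le_bot_iff.mp (this ▸ inf_le_inf_right _ (gc.map_deligneSum_le hW hF hG _ _))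
    calc φ (W (m + 1)) ⊓ W' n
        ≤ (φ (deligneSum W F G (m + 1) p) ⊔ φ (W m)) ⊓ W' m ⊓ W' n := by
          rw [← gc.l_sup, inf_assoc, inf_eq_right.mpr (h'.monotone_weight hnm)]
          exact inf_le_inf_right _ (gc.monotone_l hp)
      _ = φ (W m) ⊓ W' n := by
          rw [sup_comm, sup_inf_assoc_of_le _ (hW m), hD, sup_bot_eq]
      _ ≤ φ (W n) := ih

end Morphism

lemma Submodule.map_baseChange_le {R A M N : Type*} [CommSemiring R] [Semiring A]
    [Algebra R A] [AddCommMonoid M] [Module R M] [AddCommMonoid N] [Module R N] {g : M →ₗ[R] N}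
    {p : Submodule R M} {q : Submodule R N} (hpq : p.map g ≤ q) :
    (p.baseChange A).map (g.baseChange A) ≤ q.baseChange A := by
  rw [Submodule.map_le_iff_le_comap, Submodule.baseChange_eq_span, Submodule.span_le]
  rintro _ ⟨m, hm, rfl⟩
  simpa using Submodule.tmul_mem_baseChange_of_mem (1 : A) (hpq ⟨m, hm, rfl⟩)

lemma Submodule.mem_of_one_tmul_mem_baseChange {R A M : Type*} [CommSemiring R] [Semiring A]
    [Algebra R A] [AddCommMonoid M] [Module R M] (ρ : A →ₗ[R] R) (hρ : ρ 1 = 1)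
    {p : Submodule R M} {v : M} (hv : (1 : A) ⊗ₜ[R] v ∈ p.baseChange A) : v ∈ p := by
  let r : ∀ (N : Type _) [AddCommMonoid N] [Module R N], A ⊗[R] N →ₗ[R] N :=
    fun N _ _ => (TensorProduct.lid R N).toLinearMap ∘ₗ ρ.rTensor N
  have hr : ∀ y : A ⊗[R] p, r M (p.subtype.baseChange A y) = r p y := by
    intro y
    induction y using TensorProduct.induction_on with
    | zero => simp
    | tmul a x => simp [r]
    | add x y hx hy => simp only [map_add, hx, hy, Submodule.coe_add]
  obtain ⟨y, hy⟩ := hv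
  have h1 : r M ((1 : A) ⊗ₜ[R] v) = v := by simp [r, hρ]
  rw [← h1, ← hy, hr]
  exact (r p y).2

section Complexification

variable {V V' : Type*} [AddCommGroup V] [Module ℝ V] [AddCommGroup V'] [Module ℝ V']

lemma sigmaC_tmul (z : ℂ) (v : V) : sigmaC V (z ⊗ₜ[ℝ] v) = starRingEnd ℂ z ⊗ₜ[ℝ] v := rfl

lemma sigmaC_involutive : Function.Involutive (sigmaC V) := by
  intro x
  induction x using TensorProduct.induction_on with
  | zero => simp
  | tmul z v => simp [sigmaC_tmul]
  | add x y hx hy => rw [map_add, map_add, hx, hy]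

lemma sigmaC_baseChange (g : V →ₗ[ℝ] V') (x : ℂ ⊗[ℝ] V) :
    sigmaC V' (g.baseChange ℂ x) = g.baseChange ℂ (sigmaC V x) := by
  induction x using TensorProduct.induction_on with
  | zero => simp
  | tmul z v => simp [sigmaC_tmul]
  | add x y hx hy => simp only [map_add, hx, hy]

lemma map_sigmaC_baseChange (p : Submodule ℝ V) :
    (p.baseChange ℂ).map (sigmaC V) = p.baseChange ℂ := by
  have hle : (p.baseChange ℂ).map (sigmaC V) ≤ p.baseChange ℂ := by
    rintro _ ⟨_, ⟨y, rfl⟩, rfl⟩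
    exact ⟨sigmaC p y, (sigmaC_baseChange p.subtype y).symm⟩
  exact le_antisymm hle fun x hx => ⟨sigmaC V x, hle ⟨x, hx, rfl⟩, sigmaC_involutive x⟩

lemma map_sigmaC_inf_baseChange (A : Submodule ℂ (ℂ ⊗[ℝ] V)) (p : Submodule ℝ V) :
    (A ⊓ p.baseChange ℂ).map (sigmaC V) = A.map (sigmaC V) ⊓ p.baseChange ℂ := by
  rw [Submodule.map_inf _ sigmaC_involutive.injective, map_sigmaC_baseChange]

end Complexification

theorem IsMixedHodgeStructure.isMixedOpposed {V : Type*} [AddCommGroup V] [Module ℝ V]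
    {W : ℤ → Submodule ℝ V} {F : ℤ → Submodule ℂ (ℂ ⊗[ℝ] V)}
    (h : IsMixedHodgeStructure V W F) :
    IsMixedOpposed (fun n => (W n).baseChange ℂ) F (fun q => (F q).map (sigmaC V)) := by
  obtain ⟨hW, ⟨a, ha⟩, -, hF, -, ⟨b, hb⟩, hgr⟩ := h
  have hF' : Antitone F := antitone_int_of_succ_le hF
  exact
    { monotone_weight := fun _ _ hmn => Submodule.baseChange_mono ℂ (hW hmn)
      weight_eventually_bot := ⟨a, fun n hn => by simp [ha n hn]⟩
      antitone_hodge := hF'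
      hodge_eventually_bot := ⟨b, hb⟩
      antitone_conj := fun _ _ hpq => Submodule.map_mono (hF' hpq)
      conj_eventually_bot := ⟨b, fun q hq => by simp [hb q hq]⟩
      grInduced_inf := fun n p => by
        simpa only [grInduced, map_sigmaC_inf_baseChange] using (hgr n p).1
      grInduced_sup := fun n p => by
        rw [grInduced, grInduced, sup_sup_sup_comm, sup_idem]
        simpa only [map_sigmaC_inf_baseChange] using (hgr n p).2 }

theorem mhs_morphism_strict_weight_general (V V' : Type*)
    [AddCommGroup V] [Module ℝ V]
    [AddCommGroup V'] [Module ℝ V']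
    (W : ℤ → Submodule ℝ V) (F : ℤ → Submodule ℂ (ℂ ⊗[ℝ] V))
    (W' : ℤ → Submodule ℝ V') (F' : ℤ → Submodule ℂ (ℂ ⊗[ℝ] V'))
    (hWF : IsMixedHodgeStructure V W F) (hWF' : IsMixedHodgeStructure V' W' F')
    (f : V →ₗ[ℝ] V')
    (hfW : ∀ n : ℤ, (W n).map f ≤ W' n)
    (hfF : ∀ p : ℤ, (F p).map (f.baseChange ℂ) ≤ F' p) :
    ∀ n : ℤ, (W n).map f = LinearMap.range f ⊓ W' n := by
  intro n
  refine le_antisymm (le_inf LinearMap.map_le_range (hfW n)) ?_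
  rintro _ ⟨⟨v, rfl⟩, hv⟩
  obtain ⟨M, hM⟩ := hWF.2.2.1
  have hfG : ∀ q, ((F q).map (sigmaC V)).map (f.baseChange ℂ) ≤ (F' q).map (sigmaC V') := by
    rintro q _ ⟨_, ⟨x, hx, rfl⟩, rfl⟩
    exact ⟨_, hfF q ⟨x, hx, rfl⟩, sigmaC_baseChange f x⟩
  have hstrict := hWF.isMixedOpposed.map_weight_inf_le hWF'.isMixedOpposed
    (Submodule.gc_map_comap _) (fun n => Submodule.map_baseChange_le (hfW n)) hfF hfG
    n (max M n)
  have hv1 : (1 : ℂ) ⊗ₜ[ℝ] f v ∈ ((W (max M n)).baseChange ℂ).map (f.baseChange ℂ) :=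
    ⟨1 ⊗ₜ v, by simp [hM _ (le_max_left M n)], rfl⟩
  exact Submodule.mem_of_one_tmul_mem_baseChange Complex.reLm Complex.one_re
    (Submodule.map_baseChange_le le_rfl
      (hstrict ⟨hv1, Submodule.tmul_mem_baseChange_of_mem 1 hv⟩))

/-- Every morphism of mixed Hodge structures is strictly compatible with
the weight filtrations: `f(W_n) = f(V) ⊓ W'_n` for every `n`. -/
theorem mhs_morphism_strict_weight (V V' : Type*)
    [AddCommGroup V] [Module ℝ V] [FiniteDimensional ℝ V]
    [AddCommGroup V'] [Module ℝ V'] [FiniteDimensional ℝ V']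
    (W : ℤ → Submodule ℝ V) (F : ℤ → Submodule ℂ (ℂ ⊗[ℝ] V))
    (W' : ℤ → Submodule ℝ V') (F' : ℤ → Submodule ℂ (ℂ ⊗[ℝ] V'))
    (hWF : IsMixedHodgeStructure V W F) (hWF' : IsMixedHodgeStructure V' W' F')
    (f : V →ₗ[ℝ] V')
    (hfW : ∀ n : ℤ, (W n).map f ≤ W' n)
    (hfF : ∀ p : ℤ, (F p).map (f.baseChange ℂ) ≤ F' p) :
    ∀ n : ℤ, (W n).map f = LinearMap.range f ⊓ W' n :=
  mhs_morphism_strict_weight_general V V' W F W' F' hWF hWF' f hfW hfF
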